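/- Let u : [0,1] → gl(d,ℝ) and n, ν : [0,1] → ℝ^d be continuous curves such that m_u(t) := D_u ℓ(u(t),n(t),ν(t)) and m_ν(t) := D_ν ℓ(u(t),n(t),ν(t)) are continuously differentiable and m_n(t) := D_n ℓ(u(t),n(t),ν(t)) is continuous, and suppose the Euler–Poincaré equations hold for all t: m_u'(t) + ad*_{u(t)} m_u(t) + m_n(t) ⋄ n(t) + m_ν(t) ⋄ ν(t) = 0 and m_ν'(t) + u(t) ⋆ m_ν(t) − m_n(t) = 0. Then for every C¹ pair of variation curves ξ : [0,1] → gl(d,ℝ) and ϖ : [0,1] → ℝ^d with ξ(0) = ξ(1) = 0 and ϖ(0) = ϖ(1) = 0, the first-variation integral ∫₀¹ [ ⟨m_u(t), ξ'(t) − [u(t), ξ(t)]⟩ + ⟨m_n(t), ϖ(t) + ξ(t) n(t)⟩ + ⟨m_ν(t), ϖ'(t) + ξ(t) ν(t) − u(t) ϖ(t)⟩ ] dt vanishes. -/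

import Mathlib

open Set

attribute [local instance] Matrix.normedAddCommGroup Matrix.normedSpace

/-- The diamond operator `⋄ : (ℝ^d)* × ℝ^d → gl(d,ℝ)*`, `⟨σ ⋄ v, u⟩ = −⟨σ, u v⟩`. -/
noncomputable def diaM {d : ℕ} (σ : (Fin d → ℝ) →L[ℝ] ℝ) (v : Fin d → ℝ) :
    Matrix (Fin d) (Fin d) ℝ →L[ℝ] ℝ :=
  LinearMap.toContinuousLinearMap
    { toFun := fun A => - σ (A.mulVec v)
      map_add' := fun A B => by simp [Matrix.add_mulVec]; ring
      map_smul' := fun c A => by simp [Matrix.smul_mulVec] }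

/-- The star operator `⋆ : gl(d,ℝ) × (ℝ^d)* → (ℝ^d)*`, `⟨u ⋆ σ, v⟩ = ⟨σ, u v⟩`. -/
noncomputable def starM {d : ℕ} (u : Matrix (Fin d) (Fin d) ℝ)
    (σ : (Fin d → ℝ) →L[ℝ] ℝ) : (Fin d → ℝ) →L[ℝ] ℝ :=
  σ.comp (LinearMap.toContinuousLinearMap u.mulVecLin)

/-- The coadjoint operator on `gl(d,ℝ)*`: `⟨ad*_u μ, ξ⟩ = ⟨μ, [u,ξ]⟩`. -/
noncomputable def coadM {d : ℕ} (u : Matrix (Fin d) (Fin d) ℝ)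
    (μ : Matrix (Fin d) (Fin d) ℝ →L[ℝ] ℝ) : Matrix (Fin d) (Fin d) ℝ →L[ℝ] ℝ :=
  LinearMap.toContinuousLinearMap
    ((μ : Matrix (Fin d) (Fin d) ℝ →ₗ[ℝ] ℝ) ∘ₗ
      (LinearMap.mulLeft ℝ u - LinearMap.mulRight ℝ u))

/-- `D_u ℓ(u,n,ν)`, the partial Fréchet derivative of `ℓ` in its first argument. -/
noncomputable def D1 {d : ℕ} (ℓ : Matrix (Fin d) (Fin d) ℝ × (Fin d → ℝ) × (Fin d → ℝ) → ℝ)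
    (u : Matrix (Fin d) (Fin d) ℝ) (n ν : Fin d → ℝ) : Matrix (Fin d) (Fin d) ℝ →L[ℝ] ℝ :=
  fderiv ℝ (fun u' => ℓ (u', n, ν)) u

/-- `D_n ℓ(u,n,ν)`, the partial Fréchet derivative of `ℓ` in its second argument. -/
noncomputable def D2 {d : ℕ} (ℓ : Matrix (Fin d) (Fin d) ℝ × (Fin d → ℝ) × (Fin d → ℝ) → ℝ)
    (u : Matrix (Fin d) (Fin d) ℝ) (n ν : Fin d → ℝ) : (Fin d → ℝ) →L[ℝ] ℝ :=
  fderiv ℝ (fun n' => ℓ (u, n', ν)) n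

/-- `D_ν ℓ(u,n,ν)`, the partial Fréchet derivative of `ℓ` in its third argument. -/
noncomputable def D3 {d : ℕ} (ℓ : Matrix (Fin d) (Fin d) ℝ × (Fin d → ℝ) × (Fin d → ℝ) → ℝ)
    (u : Matrix (Fin d) (Fin d) ℝ) (n ν : Fin d → ℝ) : (Fin d → ℝ) →L[ℝ] ℝ :=
  fderiv ℝ (fun ν' => ℓ (u, n, ν')) ν

noncomputable instance matDualNormedAddCommGroup {d : ℕ} :
    NormedAddCommGroup (Matrix (Fin d) (Fin d) ℝ →L[ℝ] ℝ) :=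
  ContinuousLinearMap.toNormedAddCommGroup

noncomputable instance matDualNormedSpace {d : ℕ} :
    NormedSpace ℝ (Matrix (Fin d) (Fin d) ℝ →L[ℝ] ℝ) :=
  ContinuousLinearMap.toNormedSpace


private lemma contOn_mulVec {d : ℕ} {A : ℝ → Matrix (Fin d) (Fin d) ℝ} {v : ℝ → Fin d → ℝ}
    {s : Set ℝ} (hA : ContinuousOn A s) (hv : ContinuousOn v s) :
    ContinuousOn (fun t => (A t).mulVec (v t)) s := by
  rw [continuousOn_iff_continuous_restrict] at hA hv ⊢
  exact hA.matrix_mulVec hv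

/-- If the metamorphosis Euler–Poincaré equations hold along the curves, then the
first-variation integral vanishes for all admissible variations `(ξ, ϖ)` vanishing at
the endpoints. -/
theorem first_variation_vanishes_of_euler_poincare {d : ℕ}
    (ℓ : Matrix (Fin d) (Fin d) ℝ × (Fin d → ℝ) × (Fin d → ℝ) → ℝ)
    (hℓ : ContDiff ℝ 1 ℓ)
    (u : ℝ → Matrix (Fin d) (Fin d) ℝ) (n ν : ℝ → Fin d → ℝ)
    (hu : ContinuousOn u (Icc 0 1)) (hn : ContinuousOn n (Icc 0 1))
    (hν : ContinuousOn ν (Icc 0 1))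
    (hmu : ContDiffOn ℝ 1 (fun t => D1 ℓ (u t) (n t) (ν t)) (Icc 0 1))
    (hmν : ContDiffOn ℝ 1 (fun t => D3 ℓ (u t) (n t) (ν t)) (Icc 0 1))
    (hmn : ContinuousOn (fun t => D2 ℓ (u t) (n t) (ν t)) (Icc 0 1))
    (hEP1 : ∀ t ∈ Icc (0:ℝ) 1,
      derivWithin (fun τ => D1 ℓ (u τ) (n τ) (ν τ)) (Icc 0 1) t
        + coadM (u t) (D1 ℓ (u t) (n t) (ν t))
        + diaM (D2 ℓ (u t) (n t) (ν t)) (n t)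
        + diaM (D3 ℓ (u t) (n t) (ν t)) (ν t) = 0)
    (hEP2 : ∀ t ∈ Icc (0:ℝ) 1,
      derivWithin (fun τ => D3 ℓ (u τ) (n τ) (ν τ)) (Icc 0 1) t
        + starM (u t) (D3 ℓ (u t) (n t) (ν t))
        - D2 ℓ (u t) (n t) (ν t) = 0) :
    ∀ (ξ : ℝ → Matrix (Fin d) (Fin d) ℝ) (ϖ : ℝ → Fin d → ℝ),
      ContDiffOn ℝ 1 ξ (Icc 0 1) → ContDiffOn ℝ 1 ϖ (Icc 0 1) →
      ξ 0 = 0 → ξ 1 = 0 → ϖ 0 = 0 → ϖ 1 = 0 →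
      (∫ t in (0:ℝ)..1,
        ((D1 ℓ (u t) (n t) (ν t)) (derivWithin ξ (Icc 0 1) t - (u t * ξ t - ξ t * u t))
         + (D2 ℓ (u t) (n t) (ν t)) (ϖ t + (ξ t).mulVec (n t))
         + (D3 ℓ (u t) (n t) (ν t))
             (derivWithin ϖ (Icc 0 1) t + (ξ t).mulVec (ν t) - (u t).mulVec (ϖ t)))) = 0 := by
  intro ξ ϖ hξ hϖ hξ0 hξ1 hϖ0 hϖ1
  have hud : UniqueDiffOn ℝ (Icc (0:ℝ) 1) := uniqueDiffOn_Icc one_pos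
  set mu : ℝ → Matrix (Fin d) (Fin d) ℝ →L[ℝ] ℝ := fun t => D1 ℓ (u t) (n t) (ν t) with hmu_def
  set mn : ℝ → (Fin d → ℝ) →L[ℝ] ℝ := fun t => D2 ℓ (u t) (n t) (ν t) with hmn_def
  set mv : ℝ → (Fin d → ℝ) →L[ℝ] ℝ := fun t => D3 ℓ (u t) (n t) (ν t) with hmv_def
  set F : ℝ → ℝ := fun t => mu t (ξ t) + mv t (ϖ t) with hF_def
  set I : ℝ → ℝ := fun t =>
        (mu t) (derivWithin ξ (Icc 0 1) t - (u t * ξ t - ξ t * u t))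
         + (mn t) (ϖ t + (ξ t).mulVec (n t))
         + (mv t)
             (derivWithin ϖ (Icc 0 1) t + (ξ t).mulVec (ν t) - (u t).mulVec (ϖ t)) with hI_def
  have hF : ∀ t ∈ Icc (0:ℝ) 1, HasDerivWithinAt F (I t) (Icc 0 1) t := by
    intro t ht
    have h1 : HasDerivWithinAt mu (derivWithin mu (Icc 0 1) t) (Icc 0 1) t :=
      (hmu.differentiableOn one_ne_zero t ht).hasDerivWithinAt
    have h3 : HasDerivWithinAt mv (derivWithin mv (Icc 0 1) t) (Icc 0 1) t :=
      (hmν.differentiableOn one_ne_zero t ht).hasDerivWithinAt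
    have hxi : HasDerivWithinAt ξ (derivWithin ξ (Icc 0 1) t) (Icc 0 1) t :=
      (hξ.differentiableOn one_ne_zero t ht).hasDerivWithinAt
    have hpi : HasDerivWithinAt ϖ (derivWithin ϖ (Icc 0 1) t) (Icc 0 1) t :=
      (hϖ.differentiableOn one_ne_zero t ht).hasDerivWithinAt
    have hA := (h1.clm_apply hxi).add (h3.clm_apply hpi)
    have e1 := congrArg (fun L : Matrix (Fin d) (Fin d) ℝ →L[ℝ] ℝ => L (ξ t)) (hEP1 t ht)
    have e2 := congrArg (fun L : (Fin d → ℝ) →L[ℝ] ℝ => L (ϖ t)) (hEP2 t ht)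
    simp only [ContinuousLinearMap.add_apply, ContinuousLinearMap.sub_apply,
      ContinuousLinearMap.zero_apply, coadM, diaM, starM,
      LinearMap.coe_toContinuousLinearMap', LinearMap.coe_mk, AddHom.coe_mk,
      LinearMap.coe_comp, Function.comp_apply, LinearMap.sub_apply,
      LinearMap.mulLeft_apply, LinearMap.mulRight_apply,
      ContinuousLinearMap.coe_comp', Matrix.mulVecLin_apply] at e1 e2
    refine (hA : HasDerivWithinAt F _ (Icc 0 1) t).congr_deriv ?_
    simp only [hI_def, map_sub, map_add]
    have E1 : (derivWithin mu (Icc 0 1) t) (ξ t)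
        = - (mu t) (u t * ξ t - ξ t * u t) + (mn t) ((ξ t).mulVec (n t))
          + (mv t) ((ξ t).mulVec (ν t)) := by
      have : (derivWithin mu (Icc 0 1) t) (ξ t)
          + (mu t) (u t * ξ t - ξ t * u t)
          + (- (mn t) ((ξ t).mulVec (n t)))
          + (- (mv t) ((ξ t).mulVec (ν t))) = 0 := by
        simpa [map_sub] using e1
      linarith
    have E2 : (derivWithin mv (Icc 0 1) t) (ϖ t)
        = (mn t) (ϖ t) - (mv t) ((u t).mulVec (ϖ t)) := by
      have : (derivWithin mv (Icc 0 1) t) (ϖ t)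
          + (mv t) ((u t).mulVec (ϖ t)) - (mn t) (ϖ t) = 0 := e2
      linarith
    erw [E1, E2]
    simp only [map_sub]
    ring!
  have hFC : ContinuousOn F (Icc 0 1) := by
    exact ((hmu.continuousOn.clm_apply (hξ.continuousOn))).add
      ((hmν.continuousOn.clm_apply (hϖ.continuousOn)))
  have hIC : ContinuousOn I (Icc 0 1) := by
    have hξ' : ContinuousOn (fun t => derivWithin ξ (Icc 0 1) t) (Icc 0 1) :=
      hξ.continuousOn_derivWithin hud le_rfl
    have hϖ' : ContinuousOn (fun t => derivWithin ϖ (Icc 0 1) t) (Icc 0 1) :=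
      hϖ.continuousOn_derivWithin hud le_rfl
    haveI : @ContinuousMul (Matrix (Fin d) (Fin d) ℝ)
        (PseudoMetricSpace.toUniformSpace.toTopologicalSpace) _ :=
      ⟨(Matrix.topologicalRing (n := Fin d) (R := ℝ)).continuous_mul⟩
    apply ContinuousOn.add
    apply ContinuousOn.add
    · exact hmu.continuousOn.clm_apply
        (hξ'.sub ((hu.mul hξ.continuousOn).sub (hξ.continuousOn.mul hu)))
    · exact hmn.clm_apply (hϖ.continuousOn.add
        (contOn_mulVec hξ.continuousOn hn))
    · exact hmν.continuousOn.clm_apply ((hϖ'.add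
        (contOn_mulVec hξ.continuousOn hν)).sub
        (contOn_mulVec hu hϖ.continuousOn))
  have key : (∫ t in (0:ℝ)..1, I t) = F 1 - F 0 := by
    apply intervalIntegral.integral_eq_sub_of_hasDeriv_right_of_le zero_le_one hFC
    · intro t ht
      exact ((hF t (Ioo_subset_Icc_self ht)).hasDerivAt
        (Icc_mem_nhds ht.1 ht.2)).hasDerivWithinAt
    · exact (hIC.mono (by rw [uIcc_of_le zero_le_one])).intervalIntegrable
  have : (∫ t in (0:ℝ)..1, I t) = 0 := by
    rw [key]; simp [hF_def, hξ0, hξ1, hϖ0, hϖ1]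
  simpa [hI_def] using this
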